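/- Intersection upper bound: let L₁ and L₂ be suffix-free regular languages over an alphabet Σ with NSC(L₁) = m and NSC(L₂) = n, where m, n ≥ 2. Then NSC(L₁ ∩ L₂) ≤ mn − (m + n) + 2, i.e., there is an NFA with at most mn − (m+n) + 2 states accepting L₁ ∩ L₂. -/

import Mathlib

/-!
In an NFA for a nonempty suffix-free language the start state is never re-entered: if reading
`w ≠ []` can lead from the start state back to it and `x` is accepted, then so is `w ++ x`, which
has the accepted proper suffix `x`. Hence every state of the product automaton reached by a
nonempty word is a pair of non-start states, and restricting the product to these pairs and the
start pair leaves `(m - 1) * (n - 1) + 1` states.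
-/

open Computability

/-- A nondeterministic finite automaton with a single start state and
no ε-transitions. -/
structure SNFA (α : Type) (σ : Type) where
  step : σ → α → Set σ
  start : σ
  accept : Set σ

namespace SNFA

variable {α σ : Type}

/-- The set of states reachable from some state in `S` by one transition on `a`. -/
def stepSet (M : SNFA α σ) (S : Set σ) (a : α) : Set σ :=
  ⋃ s ∈ S, M.step s a

/-- The set of states reachable from the set `S` of states by reading the word `w`. -/
def evalFrom (M : SNFA α σ) (S : Set σ) (w : List α) : Set σ :=
  w.foldl M.stepSet S

/-- The language accepted by `M`: all words spelled out by a path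
from the start state to an accepting state. -/
def accepts (M : SNFA α σ) : Language α :=
  {w | ∃ q ∈ M.accept, q ∈ M.evalFrom {M.start} w}

end SNFA

/-- A language is suffix-free if no word of the language is a proper suffix
of another word of the language. -/
def SuffixFree {α : Type} (L : Language α) : Prop :=
  ∀ u v : List α, u ∈ L → v ∈ L → u <:+ v → u = v

/-- `NSCle L k`: there is an NFA with at most `k` states accepting `L`
(so the nondeterministic state complexity of `L` is at most `k`). -/
def NSCle {α : Type} (L : Language α) (k : ℕ) : Prop :=
  ∃ (σ : Type) (x : Fintype σ) (M : SNFA α σ), M.accepts = L ∧ @Fintype.card σ x ≤ k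

/-- `NSCge L k`: every NFA accepting `L` has at least `k` states
(so the nondeterministic state complexity of `L` is at least `k`). -/
def NSCge {α : Type} (L : Language α) (k : ℕ) : Prop :=
  ∀ (σ : Type) [Fintype σ] (M : SNFA α σ), M.accepts = L → k ≤ Fintype.card σ

/-- `NSCeq L m`: the nondeterministic state complexity of `L` is exactly `m`:
some NFA with `m` states accepts `L` and every NFA accepting `L` has at least
`m` states. -/
def NSCeq {α : Type} (L : Language α) (m : ℕ) : Prop :=
  NSCle L m ∧ NSCge L m

namespace SNFA

variable {α σ σ₁ σ₂ : Type}

theorem evalFrom_cons (M : SNFA α σ) (S : Set σ) (a : α) (w : List α) :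
    M.evalFrom S (a :: w) = M.evalFrom (M.stepSet S a) w := rfl

theorem evalFrom_append (M : SNFA α σ) (S : Set σ) (u v : List α) :
    M.evalFrom S (u ++ v) = M.evalFrom (M.evalFrom S u) v :=
  List.foldl_append

theorem stepSet_mono (M : SNFA α σ) {S T : Set σ} (h : S ⊆ T) (a : α) :
    M.stepSet S a ⊆ M.stepSet T a :=
  Set.biUnion_subset_biUnion_left h

theorem evalFrom_mono (M : SNFA α σ) {S T : Set σ} (h : S ⊆ T) (w : List α) :
    M.evalFrom S w ⊆ M.evalFrom T w := by
  induction w generalizing S T with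
  | nil => exact h
  | cons a w ih => exact ih (M.stepSet_mono h a)

theorem start_notMem_evalFrom_of_suffixFree (M : SNFA α σ) (hsf : SuffixFree M.accepts)
    {x w : List α} (hx : x ∈ M.accepts) (hw : w ≠ []) :
    M.start ∉ M.evalFrom {M.start} w := by
  intro hstart
  obtain ⟨q, hq, hqx⟩ := hx
  have hwx : w ++ x ∈ M.accepts := by
    refine ⟨q, hq, ?_⟩
    rw [evalFrom_append]
    exact M.evalFrom_mono (Set.singleton_subset_iff.2 hstart) x hqx
  have hlen := congrArg List.length (hsf x (w ++ x) ⟨q, hq, hqx⟩ hwx ⟨w, rfl⟩)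
  simp only [List.length_append] at hlen
  exact hw (List.length_eq_zero_iff.mp (by omega))

def prod (M₁ : SNFA α σ₁) (M₂ : SNFA α σ₂) : SNFA α (σ₁ × σ₂) where
  step q a := M₁.step q.1 a ×ˢ M₂.step q.2 a
  start := (M₁.start, M₂.start)
  accept := M₁.accept ×ˢ M₂.accept

section Prod

variable (M₁ : SNFA α σ₁) (M₂ : SNFA α σ₂)

theorem start_prod : (M₁.prod M₂).start = (M₁.start, M₂.start) := rfl

theorem stepSet_prod (A : Set σ₁) (B : Set σ₂) (a : α) :
    (M₁.prod M₂).stepSet (A ×ˢ B) a = M₁.stepSet A a ×ˢ M₂.stepSet B a := by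
  ext ⟨p, q⟩
  simp only [stepSet, prod, Set.mem_iUnion, Set.mem_prod, exists_prop, Prod.exists]
  aesop

theorem evalFrom_prod (A : Set σ₁) (B : Set σ₂) (w : List α) :
    (M₁.prod M₂).evalFrom (A ×ˢ B) w = M₁.evalFrom A w ×ˢ M₂.evalFrom B w := by
  induction w generalizing A B with
  | nil => rfl
  | cons a w ih => rw [evalFrom_cons, stepSet_prod, ih]; rfl

theorem accepts_prod : (M₁.prod M₂).accepts = M₁.accepts ⊓ M₂.accepts := by
  ext w
  simp only [accepts, start_prod, ← Set.singleton_prod_singleton, evalFrom_prod]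
  exact ⟨fun ⟨q, hq, hqw⟩ => ⟨⟨q.1, hq.1, hqw.1⟩, ⟨q.2, hq.2, hqw.2⟩⟩,
    fun ⟨⟨q₁, hq₁, hqw₁⟩, ⟨q₂, hq₂, hqw₂⟩⟩ => ⟨(q₁, q₂), ⟨hq₁, hq₂⟩, ⟨hqw₁, hqw₂⟩⟩⟩

theorem evalFrom_prod_subset
    (h₁ : ∀ w ≠ [], M₁.start ∉ M₁.evalFrom {M₁.start} w)
    (h₂ : ∀ w ≠ [], M₂.start ∉ M₂.evalFrom {M₂.start} w) (w : List α) :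
    (M₁.prod M₂).evalFrom {(M₁.prod M₂).start} w
      ⊆ insert (M₁.start, M₂.start) ({M₁.start}ᶜ ×ˢ {M₂.start}ᶜ) := by
  rcases eq_or_ne w [] with rfl | hw
  · exact Set.singleton_subset_iff.2 (Set.mem_insert _ _)
  · rintro ⟨p, q⟩ hpq
    rw [start_prod, ← Set.singleton_prod_singleton, evalFrom_prod] at hpq
    refine Set.mem_insert_of_mem _ ⟨?_, ?_⟩
    · exact fun hp => h₁ w hw (Set.mem_singleton_iff.1 hp ▸ hpq.1)
    · exact fun hq => h₂ w hw (Set.mem_singleton_iff.1 hq ▸ hpq.2)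

end Prod

def restrict (M : SNFA α σ) (R : Set σ) (hR : M.start ∈ R) : SNFA α R where
  step q a := Subtype.val ⁻¹' M.step q a
  start := ⟨M.start, hR⟩
  accept := Subtype.val ⁻¹' M.accept

theorem evalFrom_restrict (M : SNFA α σ) {R : Set σ} (hR : M.start ∈ R)
    (hreach : ∀ w, M.evalFrom {M.start} w ⊆ R) (w : List α) :
    (M.restrict R hR).evalFrom {(M.restrict R hR).start} w
      = Subtype.val ⁻¹' M.evalFrom {M.start} w := by
  induction w using List.reverseRecOn with
  | nil => ext ⟨q, hq⟩; simp [evalFrom, restrict, Subtype.ext_iff]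
  | append_singleton w a ih =>
    rw [evalFrom_append, evalFrom_append, ih]
    ext ⟨q, hq⟩
    simp only [evalFrom, List.foldl, stepSet, restrict, Set.mem_preimage, Set.mem_iUnion,
      exists_prop, Subtype.exists]
    exact ⟨fun ⟨p, _, hp, hqp⟩ => ⟨p, hp, hqp⟩, fun ⟨p, hp, hqp⟩ => ⟨p, hreach w hp, hp, hqp⟩⟩

theorem accepts_restrict (M : SNFA α σ) {R : Set σ} (hR : M.start ∈ R)
    (hreach : ∀ w, M.evalFrom {M.start} w ⊆ R) :
    (M.restrict R hR).accepts = M.accepts := by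
  ext w
  simp only [accepts, M.evalFrom_restrict hR hreach]
  exact ⟨fun ⟨q, hq, hqw⟩ => ⟨q, hq, hqw⟩, fun ⟨q, hq, hqw⟩ => ⟨⟨q, hreach w hqw⟩, hq, hqw⟩⟩

end SNFA

theorem NSCle.mono {α : Type} {L : Language α} {k l : ℕ} (h : NSCle L k) (hkl : k ≤ l) :
    NSCle L l :=
  let ⟨σ, x, M, hM, hcard⟩ := h
  ⟨σ, x, M, hM, hcard.trans hkl⟩

theorem nscle_bot {α : Type} : NSCle (⊥ : Language α) 1 :=
  ⟨Unit, inferInstance, ⟨fun _ _ => ∅, (), ∅⟩,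
    Set.eq_empty_of_forall_notMem fun _ ⟨_, hq, _⟩ => hq, le_rfl⟩

theorem nscle_inf_of_suffixFree {α σ₁ σ₂ : Type} [Fintype σ₁] [Fintype σ₂]
    (M₁ : SNFA α σ₁) (M₂ : SNFA α σ₂)
    (hsf₁ : SuffixFree M₁.accepts) (hsf₂ : SuffixFree M₂.accepts)
    {x : List α} (hx : x ∈ M₁.accepts ⊓ M₂.accepts) :
    NSCle (M₁.accepts ⊓ M₂.accepts) ((Fintype.card σ₁ - 1) * (Fintype.card σ₂ - 1) + 1) := by
  classical
  set R : Finset (σ₁ × σ₂) :=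
    insert (M₁.start, M₂.start) (Finset.univ.erase M₁.start ×ˢ Finset.univ.erase M₂.start)
  have hreach : ∀ w, (M₁.prod M₂).evalFrom {(M₁.prod M₂).start} w ⊆ R := by
    intro w
    convert SNFA.evalFrom_prod_subset M₁ M₂
      (fun w hw => M₁.start_notMem_evalFrom_of_suffixFree hsf₁ hx.1 hw)
      (fun w hw => M₂.start_notMem_evalFrom_of_suffixFree hsf₂ hx.2 hw) w using 1
    ext; simp [R]
  refine ⟨R, inferInstance,
    (M₁.prod M₂).restrict R (Finset.mem_coe.2 (Finset.mem_insert_self _ _)),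
    by rw [SNFA.accepts_restrict _ _ hreach, SNFA.accepts_prod], ?_⟩
  calc Fintype.card R = R.card := Fintype.card_coe R
    _ ≤ _ := by
      refine (Finset.card_insert_le _ _).trans ?_
      simp [Finset.card_product, Finset.card_erase_of_mem]

theorem intersection_upper_general {α : Type} (L₁ L₂ : Language α) (m n : ℕ)
    (hsf₁ : SuffixFree L₁) (hsf₂ : SuffixFree L₂)
    (hm : NSCeq L₁ m) (hn : NSCeq L₂ n) :
    NSCle (L₁ ⊓ L₂) (m * n - (m + n) + 2) := by
  by_cases hne : ∃ x, x ∈ L₁ ⊓ L₂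
  · obtain ⟨⟨σ₁, _, M₁, rfl, hcard₁⟩, -⟩ := hm
    obtain ⟨⟨σ₂, _, M₂, rfl, hcard₂⟩, -⟩ := hn
    obtain ⟨x, hx⟩ := hne
    refine (nscle_inf_of_suffixFree M₁ M₂ hsf₁ hsf₂ hx).mono ?_
    calc (Fintype.card σ₁ - 1) * (Fintype.card σ₂ - 1) + 1 ≤ (m - 1) * (n - 1) + 1 := by
          gcongr
      _ ≤ m * n - (m + n) + 2 := by
          rcases m with _ | m
          · omega
          rcases n with _ | n
          · omega
          simp only [Nat.add_sub_cancel, add_mul, mul_add]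
          omega
  · push Not at hne
    have hbot : L₁ ⊓ L₂ = ⊥ := Set.eq_empty_iff_forall_notMem.2 hne
    exact hbot ▸ nscle_bot.mono (by omega)

/-- **Intersection, upper bound.** If `L₁` and `L₂` are suffix-free regular
languages with nondeterministic state complexities `m, n ≥ 2`, then some NFA
with at most `m * n - (m + n) + 2` states accepts `L₁ ∩ L₂`. -/
theorem intersection_upper {α : Type} (L₁ L₂ : Language α) (m n : ℕ)
    (hsf₁ : SuffixFree L₁) (hsf₂ : SuffixFree L₂)
    (hm : NSCeq L₁ m) (hn : NSCeq L₂ n) (hm2 : 2 ≤ m) (hn2 : 2 ≤ n) :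
    NSCle (L₁ ⊓ L₂) (m * n - (m + n) + 2) :=
  intersection_upper_general L₁ L₂ m n hsf₁ hsf₂ hm hn
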